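/- arXiv:1404.5209 — 3 statements merged into one kernel-verified Lean document; each statement's English description precedes it below -/
import Mathlib

section
/- Let A, B, Q, R define a continuous-time LQR problem, with R block diagonal symmetric positive definite and Π_i the block selector matrices. Suppose a symmetric matrix P̄ and feedback F̄ = −R^{-1}B^T P̄ satisfy, for some i, the modified continuous algebraic Riccati equation 0 = P̄ B^{(i)} (R^{(i)})^{-1} (B^{(i)})^T P̄ − P̄ A^{(i)} − (A^{(i)})^T P̄ − Q^{(i)}, where A^{(i)} = A + B(I − Π_iΠ_i^T)F̄, B^{(i)} = BΠ_i, Q^{(i)} = Q + F̄^T (I − Π_iΠ_i^T) R (I − Π_iΠ_i^T) F̄, R^{(i)} = Π_i^T R Π_i. Then P̄ satisfies the full continuous algebraic Riccati equation 0 = P̄ B R^{-1} B^T P̄ − P̄ A − A^T P̄ − Q. -/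
open Matrix

/-- A fixed point of the split optimal policy iteration for continuous-time LQR
solves the full continuous algebraic Riccati equation. -/
theorem stmt8 {n m r : ℕ} {d : Fin n → ℕ}
    (Sel : ∀ i : Fin n, Matrix (Fin r) (Fin (d i)) ℝ)
    (hortho : ∀ i, (Sel i)ᵀ * Sel i = 1)
    (hsum : ∑ i, Sel i * (Sel i)ᵀ = 1)
    (A : Matrix (Fin m) (Fin m) ℝ) (B : Matrix (Fin m) (Fin r) ℝ)
    (Q : Matrix (Fin m) (Fin m) ℝ) (hQ : Q.IsHermitian)
    (R : Matrix (Fin r) (Fin r) ℝ) (hR : R.PosDef)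
    (hblk : ∀ j k, j ≠ k → (Sel j)ᵀ * R * Sel k = 0)
    (Pbar : Matrix (Fin m) (Fin m) ℝ) (hP : Pbar.IsHermitian)
    (F : Matrix (Fin r) (Fin m) ℝ) (hF : F = -(R⁻¹ * Bᵀ * Pbar))
    (i : Fin n)
    -- modified data for subsystem i
    (Ihat : Matrix (Fin r) (Fin r) ℝ) (hIhat : Ihat = 1 - Sel i * (Sel i)ᵀ)
    (Ai : Matrix (Fin m) (Fin m) ℝ) (hAi : Ai = A + B * Ihat * F)
    (Bi : Matrix (Fin m) (Fin (d i)) ℝ) (hBi : Bi = B * Sel i)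
    (Qi : Matrix (Fin m) (Fin m) ℝ) (hQi : Qi = Q + Fᵀ * Ihat * R * Ihat * F)
    (Ri : Matrix (Fin (d i)) (Fin (d i)) ℝ) (hRi : Ri = (Sel i)ᵀ * R * Sel i)
    -- modified continuous algebraic Riccati equation
    (hCARE : (0 : Matrix (Fin m) (Fin m) ℝ) =
      Pbar * Bi * Ri⁻¹ * Biᵀ * Pbar - Pbar * Ai - Aiᵀ * Pbar - Qi) :
    (0 : Matrix (Fin m) (Fin m) ℝ) =
      Pbar * B * R⁻¹ * Bᵀ * Pbar - Pbar * A - Aᵀ * Pbar - Q := by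
  -- symmetry facts
  have hRT : Rᵀ = R := by
    have := hR.isHermitian
    rwa [Matrix.IsHermitian, conjTranspose_eq_transpose_of_trivial] at this
  have hPT : Pbarᵀ = Pbar := by
    rwa [Matrix.IsHermitian, conjTranspose_eq_transpose_of_trivial] at hP
  have hRinvT : (R⁻¹)ᵀ = R⁻¹ := by rw [Matrix.transpose_nonsing_inv, hRT]
  have hRdet : IsUnit R.det := isUnit_iff_ne_zero.2 hR.det_pos.ne'
  have hRR : R * R⁻¹ = 1 := Matrix.mul_nonsing_inv R hRdet
  have hRR' : R⁻¹ * R = 1 := Matrix.nonsing_inv_mul R hRdet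
  -- notation: E = Sel i * (Sel i)ᵀ (written out)
  have hEE : (Sel i * (Sel i)ᵀ) * (Sel i * (Sel i)ᵀ) = Sel i * (Sel i)ᵀ := by
    rw [Matrix.mul_assoc, ← Matrix.mul_assoc (Sel i)ᵀ, hortho i, Matrix.one_mul]
  have h1 : (Sel i)ᵀ * R = Ri * (Sel i)ᵀ := by
    calc (Sel i)ᵀ * R = (Sel i)ᵀ * R * (∑ k, Sel k * (Sel k)ᵀ) := by
          rw [hsum, Matrix.mul_one]
    _ = ∑ k, (Sel i)ᵀ * R * (Sel k * (Sel k)ᵀ) := by rw [Matrix.mul_sum]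
    _ = (Sel i)ᵀ * R * (Sel i * (Sel i)ᵀ) := by
        refine Finset.sum_eq_single i (fun k _ hk => ?_) (by simp)
        rw [← Matrix.mul_assoc, hblk i k (Ne.symm hk), Matrix.zero_mul]
    _ = Ri * (Sel i)ᵀ := by rw [hRi, ← Matrix.mul_assoc]
  have hRiT : Riᵀ = Ri := by
    rw [hRi, Matrix.transpose_mul, Matrix.transpose_mul, Matrix.transpose_transpose,
      hRT, Matrix.mul_assoc]
  have h2 : R * Sel i = Sel i * Ri := by
    have := congrArg Matrix.transpose h1
    rwa [Matrix.transpose_mul, Matrix.transpose_mul, Matrix.transpose_transpose,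
      hRT, hRiT] at this
  have hER : (Sel i * (Sel i)ᵀ) * R = R * (Sel i * (Sel i)ᵀ) := by
    rw [Matrix.mul_assoc, h1, ← Matrix.mul_assoc, ← h2, Matrix.mul_assoc]
  have hERinv : (Sel i * (Sel i)ᵀ) * R⁻¹ = R⁻¹ * (Sel i * (Sel i)ᵀ) := by
    have He1 : R⁻¹ * ((R * (Sel i * (Sel i)ᵀ)) * R⁻¹) = (Sel i * (Sel i)ᵀ) * R⁻¹ := by
      rw [← Matrix.mul_assoc, ← Matrix.mul_assoc, hRR', Matrix.one_mul]
    have He2 : R⁻¹ * (((Sel i * (Sel i)ᵀ) * R) * R⁻¹) = R⁻¹ * (Sel i * (Sel i)ᵀ) := by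
      rw [Matrix.mul_assoc _ R R⁻¹, hRR, Matrix.mul_one]
    rw [← He1, ← hER, He2]
  have h5 : Ri * ((Sel i)ᵀ * R⁻¹ * Sel i) = 1 := by
    rw [← Matrix.mul_assoc, ← Matrix.mul_assoc, ← h1, Matrix.mul_assoc (Sel i)ᵀ R R⁻¹,
      hRR, Matrix.mul_one, hortho i]
  have h6 : Ri⁻¹ = (Sel i)ᵀ * R⁻¹ * Sel i := Matrix.inv_eq_right_inv h5
  have h7 : Sel i * Ri⁻¹ * (Sel i)ᵀ = (Sel i * (Sel i)ᵀ) * R⁻¹ := by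
    rw [h6]
    calc Sel i * ((Sel i)ᵀ * R⁻¹ * Sel i) * (Sel i)ᵀ
        = (Sel i * (Sel i)ᵀ) * R⁻¹ * (Sel i * (Sel i)ᵀ) := by
          simp only [Matrix.mul_assoc]
    _ = (Sel i * (Sel i)ᵀ) * (R⁻¹ * (Sel i * (Sel i)ᵀ)) := by rw [Matrix.mul_assoc]
    _ = (Sel i * (Sel i)ᵀ) * ((Sel i * (Sel i)ᵀ) * R⁻¹) := by rw [hERinv]
    _ = (Sel i * (Sel i)ᵀ) * R⁻¹ := by rw [← Matrix.mul_assoc, hEE]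
  -- applied form of h7
  have h7' : ∀ X : Matrix (Fin r) (Fin m) ℝ,
      Sel i * (Ri⁻¹ * ((Sel i)ᵀ * X)) = (Sel i * (Sel i)ᵀ) * (R⁻¹ * X) := by
    intro X
    calc Sel i * (Ri⁻¹ * ((Sel i)ᵀ * X)) = (Sel i * Ri⁻¹ * (Sel i)ᵀ) * X := by
          simp only [Matrix.mul_assoc]
    _ = ((Sel i * (Sel i)ᵀ) * R⁻¹) * X := by rw [h7]
    _ = (Sel i * (Sel i)ᵀ) * (R⁻¹ * X) := by rw [Matrix.mul_assoc]
  have hFT : Fᵀ = -(Pbar * (B * R⁻¹)) := by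
    rw [hF, Matrix.transpose_neg, Matrix.transpose_mul, Matrix.transpose_mul,
      hRinvT, hPT, Matrix.transpose_transpose]
  have hIT : Ihatᵀ = Ihat := by
    rw [hIhat, Matrix.transpose_sub, Matrix.transpose_one, Matrix.transpose_mul,
      Matrix.transpose_transpose]
  -- middle identity for Qi
  have hkey : Ihat * R * Ihat = R * Ihat := by
    have hERE : (Sel i * (Sel i)ᵀ) * R * (Sel i * (Sel i)ᵀ) = R * (Sel i * (Sel i)ᵀ) := by
      rw [hER, Matrix.mul_assoc, hEE]
    rw [hIhat]
    simp only [Matrix.sub_mul, Matrix.mul_sub, Matrix.one_mul, Matrix.mul_one]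
    rw [hERE]
    simp only [hER]
    abel
  have hmid : ∀ X : Matrix (Fin r) (Fin m) ℝ,
      R⁻¹ * (Ihat * (R * (Ihat * (R⁻¹ * X)))) = Ihat * (R⁻¹ * X) := by
    intro X
    calc R⁻¹ * (Ihat * (R * (Ihat * (R⁻¹ * X))))
        = (R⁻¹ * (Ihat * R * Ihat) * R⁻¹) * X := by simp only [Matrix.mul_assoc]
    _ = (R⁻¹ * (R * Ihat) * R⁻¹) * X := by rw [hkey]
    _ = (Ihat * R⁻¹) * X := by rw [← Matrix.mul_assoc R⁻¹ R, hRR', Matrix.one_mul]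
    _ = Ihat * (R⁻¹ * X) := by rw [Matrix.mul_assoc]
  -- the four terms of the modified CARE
  have e1 : Pbar * Bi * Ri⁻¹ * Biᵀ * Pbar
      = Pbar * (B * ((Sel i * (Sel i)ᵀ) * (R⁻¹ * (Bᵀ * Pbar)))) := by
    rw [hBi, Matrix.transpose_mul]
    simp only [Matrix.mul_assoc, h7']
  have e2 : Pbar * Ai
      = Pbar * A - Pbar * (B * (Ihat * (R⁻¹ * (Bᵀ * Pbar)))) := by
    rw [hAi, hF]
    simp only [Matrix.mul_add, Matrix.mul_sub, Matrix.mul_neg, Matrix.neg_mul,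
      Matrix.mul_assoc, ← sub_eq_add_neg]
  have e3 : Aiᵀ * Pbar
      = Aᵀ * Pbar - Pbar * (B * (R⁻¹ * (Ihat * (Bᵀ * Pbar)))) := by
    rw [hAi, Matrix.transpose_add, Matrix.transpose_mul, Matrix.transpose_mul, hFT, hIT]
    simp only [Matrix.add_mul, Matrix.sub_mul, Matrix.mul_neg, Matrix.neg_mul,
      Matrix.mul_assoc, ← sub_eq_add_neg]
  have e4 : Qi
      = Q + Pbar * (B * (Ihat * (R⁻¹ * (Bᵀ * Pbar)))) := by
    rw [hQi, hFT, hF]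
    simp only [Matrix.mul_neg, Matrix.neg_mul, neg_neg, Matrix.mul_assoc, hmid]
  -- combine
  have hsplit : Pbar * (B * (R⁻¹ * (Bᵀ * Pbar)))
      = Pbar * (B * ((Sel i * (Sel i)ᵀ) * (R⁻¹ * (Bᵀ * Pbar))))
        + Pbar * (B * (R⁻¹ * (Ihat * (Bᵀ * Pbar)))) := by
    have hsum2 : (Sel i * (Sel i)ᵀ) * R⁻¹ + R⁻¹ * Ihat = R⁻¹ := by
      rw [hIhat, hERinv, Matrix.mul_sub, Matrix.mul_one]
      abel
    have hthis : (Sel i * (Sel i)ᵀ) * (R⁻¹ * (Bᵀ * Pbar)) + R⁻¹ * (Ihat * (Bᵀ * Pbar))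
        = R⁻¹ * (Bᵀ * Pbar) := by
      rw [← Matrix.mul_assoc (Sel i * (Sel i)ᵀ) R⁻¹ (Bᵀ * Pbar),
        ← Matrix.mul_assoc R⁻¹ Ihat (Bᵀ * Pbar), ← Matrix.add_mul, hsum2]
    calc Pbar * (B * (R⁻¹ * (Bᵀ * Pbar)))
        = Pbar * (B * ((Sel i * (Sel i)ᵀ) * (R⁻¹ * (Bᵀ * Pbar))
            + R⁻¹ * (Ihat * (Bᵀ * Pbar)))) := by rw [hthis]
    _ = Pbar * (B * ((Sel i * (Sel i)ᵀ) * (R⁻¹ * (Bᵀ * Pbar))))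
        + Pbar * (B * (R⁻¹ * (Ihat * (Bᵀ * Pbar)))) := by
          rw [Matrix.mul_add B, Matrix.mul_add Pbar]
  calc (0 : Matrix (Fin m) (Fin m) ℝ)
      = Pbar * Bi * Ri⁻¹ * Biᵀ * Pbar - Pbar * Ai - Aiᵀ * Pbar - Qi := hCARE
  _ = Pbar * (B * ((Sel i * (Sel i)ᵀ) * (R⁻¹ * (Bᵀ * Pbar))))
      - (Pbar * A - Pbar * (B * (Ihat * (R⁻¹ * (Bᵀ * Pbar)))))
      - (Aᵀ * Pbar - Pbar * (B * (R⁻¹ * (Ihat * (Bᵀ * Pbar)))))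
      - (Q + Pbar * (B * (Ihat * (R⁻¹ * (Bᵀ * Pbar))))) := by
        rw [e1, e2, e3, e4]
  _ = (Pbar * (B * ((Sel i * (Sel i)ᵀ) * (R⁻¹ * (Bᵀ * Pbar))))
      + Pbar * (B * (R⁻¹ * (Ihat * (Bᵀ * Pbar)))))
      - Pbar * A - Aᵀ * Pbar - Q := by abel
  _ = Pbar * (B * (R⁻¹ * (Bᵀ * Pbar))) - Pbar * A - Aᵀ * Pbar - Q := by rw [← hsplit]
  _ = Pbar * B * R⁻¹ * Bᵀ * Pbar - Pbar * A - Aᵀ * Pbar - Q := by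
        simp only [Matrix.mul_assoc]
end

section
/- Let R be block diagonal symmetric positive definite and S symmetric positive definite (both r×r), Π_i a block selector matrix, Î_i := I − Π_iΠ_i^T, Z := (R+S)^{-1}, and Z_i := Π_i (Π_i^T (R+S) Π_i)^{-1} Π_i^T. Then Z^{-1} Z_i Z^{-1} − Î_i S Z_i Z^{-1} − Z^{-1} Z_i S Î_i + Î_i S Z_i S Î_i = Π_iΠ_i^T (R+S) Π_iΠ_i^T. -/
/-!
Write `P = Πᵢ Πᵢᵀ` and `Q = 1 - P`. The left-hand side factors as
`(A - Q S) Zᵢ (A - S Q)` with `A = Z⁻¹ = R + S`. Block diagonality of `R` gives `Q R Zᵢ = 0`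
and `Zᵢ R Q = 0`, so `(A - Q S) Zᵢ = P A Zᵢ = P` and likewise `Zᵢ (A - S Q) = P`; inserting
`Zᵢ = Zᵢ A Zᵢ` in the middle then yields `P A P`.
-/

open Matrix

section Ring

variable {α : Type*} [Ring α]

theorem compression_eq_of_mul_mul_self {A R S Z P : α} (hA : A = R + S)
    (hZAZ : Z * A * Z = Z) (hPAZ : P * A * Z = P) (hZAP : Z * A * P = P)
    (hRZ : R * Z = P * R * Z) (hZR : Z * R = Z * R * P) :
    A * Z * A - (1 - P) * S * Z * A - A * Z * S * (1 - P) + (1 - P) * S * Z * S * (1 - P)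
      = P * A * P := by
  subst hA
  have hleft : (R + S - (1 - P) * S) * Z = P := by
    calc (R + S - (1 - P) * S) * Z = R * Z + P * S * Z := by noncomm_ring
      _ = P * (R + S) * Z := by rw [hRZ]; noncomm_ring
      _ = P := hPAZ
  have hright : Z * (R + S - S * (1 - P)) = P := by
    calc Z * (R + S - S * (1 - P)) = Z * R + Z * S * P := by noncomm_ring
      _ = Z * (R + S) * P := by rw [hZR]; noncomm_ring
      _ = P := hZAP
  calc _ = (R + S - (1 - P) * S) * (Z * (R + S) * Z) * (R + S - S * (1 - P)) := by
        rw [hZAZ]; noncomm_ring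
    _ = ((R + S - (1 - P) * S) * Z) * (R + S) * (Z * (R + S - S * (1 - P))) := by noncomm_ring
    _ = P * (R + S) * P := by rw [hleft, hright]

end Ring

section CompressedInverse

variable {α : Type*} [CommRing α] {m l : Type*} [Fintype m] [Fintype l] [DecidableEq l]

noncomputable def compressedInverse (V : Matrix m l α) (A : Matrix m m α) : Matrix m m α :=
  V * (Vᵀ * A * V)⁻¹ * Vᵀ

variable {V : Matrix m l α} {A : Matrix m m α}

theorem compressedInverse_mul_mul_self (hB : IsUnit (Vᵀ * A * V).det) :
    compressedInverse V A * A * compressedInverse V A = compressedInverse V A := by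
  calc _ = V * ((Vᵀ * A * V)⁻¹ * (Vᵀ * A * V) * (Vᵀ * A * V)⁻¹) * Vᵀ := by
        simp only [compressedInverse, Matrix.mul_assoc]
    _ = compressedInverse V A := by rw [nonsing_inv_mul _ hB, Matrix.one_mul]; rfl

theorem proj_mul_mul_compressedInverse (hB : IsUnit (Vᵀ * A * V).det) :
    V * Vᵀ * A * compressedInverse V A = V * Vᵀ := by
  calc _ = V * ((Vᵀ * A * V) * (Vᵀ * A * V)⁻¹) * Vᵀ := by
        simp only [compressedInverse, Matrix.mul_assoc]
    _ = V * Vᵀ := by rw [mul_nonsing_inv _ hB, Matrix.mul_one]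

theorem compressedInverse_mul_mul_proj (hB : IsUnit (Vᵀ * A * V).det) :
    compressedInverse V A * A * (V * Vᵀ) = V * Vᵀ := by
  calc _ = V * ((Vᵀ * A * V)⁻¹ * (Vᵀ * A * V)) * Vᵀ := by
        simp only [compressedInverse, Matrix.mul_assoc]
    _ = V * Vᵀ := by rw [nonsing_inv_mul _ hB, Matrix.mul_one]

theorem mul_compressedInverse_eq_proj_mul {R : Matrix m m α} (h : R * V = V * Vᵀ * R * V) :
    R * compressedInverse V A = V * Vᵀ * R * compressedInverse V A := by
  simp only [compressedInverse, ← Matrix.mul_assoc]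
  rw [h]

theorem compressedInverse_mul_eq_mul_proj {R : Matrix m m α} (h : Vᵀ * R = Vᵀ * R * V * Vᵀ) :
    compressedInverse V A * R = compressedInverse V A * R * (V * Vᵀ) := by
  calc _ = V * (Vᵀ * A * V)⁻¹ * (Vᵀ * R) := by simp only [compressedInverse, Matrix.mul_assoc]
    _ = V * (Vᵀ * A * V)⁻¹ * (Vᵀ * R * V * Vᵀ) := by rw [← h]
    _ = _ := by simp only [compressedInverse, Matrix.mul_assoc]

end CompressedInverse

section BlockDiagonal

variable {α : Type*} [CommRing α] {m ι : Type*} [Fintype m] [DecidableEq m] [Fintype ι]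
  {l : ι → Type*} [∀ j, Fintype (l j)] {Sel : ∀ j, Matrix m (l j) α} {R : Matrix m m α}

theorem mul_sel_eq_proj_mul (hsum : ∑ j, Sel j * (Sel j)ᵀ = 1)
    (hblk : ∀ j k, j ≠ k → (Sel j)ᵀ * R * Sel k = 0) (i : ι) :
    R * Sel i = Sel i * (Sel i)ᵀ * R * Sel i := by
  calc R * Sel i = (∑ j, Sel j * (Sel j)ᵀ) * R * Sel i := by rw [hsum, Matrix.one_mul]
    _ = ∑ j, Sel j * ((Sel j)ᵀ * R * Sel i) := by
        simp only [Matrix.sum_mul, Matrix.mul_assoc]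
    _ = Sel i * (Sel i)ᵀ * R * Sel i := by
        rw [Finset.sum_eq_single_of_mem i (Finset.mem_univ i)
          fun j _ hj => by rw [hblk j i hj, Matrix.mul_zero]]
        simp only [Matrix.mul_assoc]

theorem sel_transpose_mul_eq_mul_proj (hsum : ∑ j, Sel j * (Sel j)ᵀ = 1)
    (hblk : ∀ j k, j ≠ k → (Sel j)ᵀ * R * Sel k = 0) (i : ι) :
    (Sel i)ᵀ * R = (Sel i)ᵀ * R * Sel i * (Sel i)ᵀ := by
  calc (Sel i)ᵀ * R = (Sel i)ᵀ * R * ∑ j, Sel j * (Sel j)ᵀ := by rw [hsum, Matrix.mul_one]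
    _ = ∑ j, (Sel i)ᵀ * R * Sel j * (Sel j)ᵀ := by
        simp only [Matrix.mul_sum, Matrix.mul_assoc]
    _ = (Sel i)ᵀ * R * Sel i * (Sel i)ᵀ :=
        Finset.sum_eq_single_of_mem i (Finset.mem_univ i)
          fun j _ hj => by rw [hblk i j (Ne.symm hj), Matrix.zero_mul]

end BlockDiagonal

theorem Matrix.PosDef.transpose_mul_mul_of_transpose_mul_self {m l : Type*} [Fintype m]
    [Fintype l] [DecidableEq l]
    {A : Matrix m m ℝ} (hA : A.PosDef) {V : Matrix m l ℝ} (hV : Vᵀ * V = 1) :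
    (Vᵀ * A * V).PosDef := by
  have hinj : Function.Injective V.mulVec := fun x y h => by
    simpa only [mulVec_mulVec, hV, one_mulVec] using congrArg (Vᵀ *ᵥ ·) h
  simpa only [conjTranspose_eq_transpose_of_trivial] using hA.conjTranspose_mul_mul_same hinj

theorem stmt9 {n r : ℕ} {d : Fin n → ℕ}
    (Sel : ∀ i : Fin n, Matrix (Fin r) (Fin (d i)) ℝ)
    (hortho : ∀ i, (Sel i)ᵀ * Sel i = 1)
    (hsum : ∑ i, Sel i * (Sel i)ᵀ = 1)
    (R S : Matrix (Fin r) (Fin r) ℝ) (hR : R.PosDef)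
    (hblk : ∀ j k, j ≠ k → (Sel j)ᵀ * R * Sel k = 0)
    (hS : S.PosDef)
    (i : Fin n)
    (Ihat : Matrix (Fin r) (Fin r) ℝ) (hIhat : Ihat = 1 - Sel i * (Sel i)ᵀ)
    (Z : Matrix (Fin r) (Fin r) ℝ) (hZ : Z = (R + S)⁻¹)
    (Zi : Matrix (Fin r) (Fin r) ℝ)
    (hZi : Zi = Sel i * ((Sel i)ᵀ * (R + S) * Sel i)⁻¹ * (Sel i)ᵀ) :
    Z⁻¹ * Zi * Z⁻¹ - Ihat * S * Zi * Z⁻¹ - Z⁻¹ * Zi * S * Ihat + Ihat * S * Zi * S * Ihat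
      = Sel i * (Sel i)ᵀ * (R + S) * (Sel i * (Sel i)ᵀ) := by
  have hA : (R + S).PosDef := hR.add hS
  have hB : IsUnit ((Sel i)ᵀ * (R + S) * Sel i).det :=
    (isUnit_iff_isUnit_det _).mp (hA.transpose_mul_mul_of_transpose_mul_self (hortho i)).isUnit
  have hZinv : Z⁻¹ = R + S := by
    rw [hZ, nonsing_inv_nonsing_inv _ ((isUnit_iff_isUnit_det _).mp hA.isUnit)]
  rw [hZinv, hIhat, show Zi = compressedInverse (Sel i) (R + S) from hZi]
  exact compression_eq_of_mul_mul_self rfl (compressedInverse_mul_mul_self hB)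
    (proj_mul_mul_compressedInverse hB) (compressedInverse_mul_mul_proj hB)
    (mul_compressedInverse_eq_proj_mul (mul_sel_eq_proj_mul hsum hblk i))
    (compressedInverse_mul_eq_mul_proj (sel_transpose_mul_eq_mul_proj hsum hblk i))
end

section
/- Let R be block diagonal symmetric positive definite, S symmetric positive semidefinite, Π_i a block selector matrix, Î_i := I − Π_iΠ_i^T, Z := (R+S)^{-1}, Z_i := Π_i(Π_i^T(R+S)Π_i)^{-1}Π_i^T. Then M := Z( Î_iZ^{-1} + Z^{-1}Î_i − Î_i(R+S)Î_i + Z^{-1}Z_iZ^{-1} − Î_iSZ_iZ^{-1} − Z^{-1}Z_iSÎ_i + Î_iSZ_iSÎ_i )Z equals Z. -/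
/-!
Write `A = R + S`, `Q = Π_i Π_iᵀ` and `Î = 1 - Q`. The first three terms of the bracket equal
`A - Q A Q`. Since `A - Î S = R + Q S`, the last four terms factor as `(R + Q S) Z_i (R + S Q)`;
block diagonality of `R` gives `R Π_i = Π_i Π_iᵀ R Π_i`, hence `(R + Q S) Z_i = Q`, and
`Q R Q = Q R`, so they sum to `Q A Q`. The bracket is therefore `A = Z⁻¹`.
-/

open Matrix

section RingIdentities

variable {α : Type*} [Ring α]

theorem compl_sandwich_add_sandwich (A Q : α) :
    (1 - Q) * A + A * (1 - Q) - (1 - Q) * A * (1 - Q) + Q * A * Q = A := by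
  noncomm_ring

theorem schur_correction_eq_sandwich (R S Q Zi : α)
    (hZi : (R + Q * S) * Zi = Q) (hQRQ : Q * R * Q = Q * R) :
    (R + S) * Zi * (R + S) - (1 - Q) * S * Zi * (R + S) - (R + S) * Zi * S * (1 - Q)
      + (1 - Q) * S * Zi * S * (1 - Q) = Q * (R + S) * Q :=
  calc _ = (R + Q * S) * Zi * (R + S * Q) := by noncomm_ring
    _ = Q * R * Q + Q * S * Q := by rw [hZi, hQRQ]; noncomm_ring
    _ = Q * (R + S) * Q := by noncomm_ring

theorem compl_sandwich_add_schur_correction_eq (R S Q Zi : α)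
    (hZi : (R + Q * S) * Zi = Q) (hQRQ : Q * R * Q = Q * R) :
    (1 - Q) * (R + S) + (R + S) * (1 - Q) - (1 - Q) * (R + S) * (1 - Q)
      + (R + S) * Zi * (R + S) - (1 - Q) * S * Zi * (R + S)
      - (R + S) * Zi * S * (1 - Q) + (1 - Q) * S * Zi * S * (1 - Q) = R + S :=
  calc _ = ((1 - Q) * (R + S) + (R + S) * (1 - Q) - (1 - Q) * (R + S) * (1 - Q))
        + ((R + S) * Zi * (R + S) - (1 - Q) * S * Zi * (R + S)
          - (R + S) * Zi * S * (1 - Q) + (1 - Q) * S * Zi * S * (1 - Q)) := by abel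
    _ = R + S := by
      rw [schur_correction_eq_sandwich R S Q Zi hZi hQRQ]
      exact compl_sandwich_add_sandwich (R + S) Q

end RingIdentities

namespace Matrix

section BlockSelectors

variable {m ι : Type*} [Fintype m] [DecidableEq m] [Fintype ι] {d : ι → Type*}
  [∀ i, Fintype (d i)] {α : Type*} [Semiring α]

theorem mul_selector_eq_of_offDiag_eq_zero (Sel : ∀ i, Matrix m (d i) α)
    (hsum : ∑ j, Sel j * (Sel j)ᵀ = 1) (M : Matrix m m α) (i : ι)
    (hM : ∀ j, j ≠ i → (Sel j)ᵀ * M * Sel i = 0) :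
    M * Sel i = Sel i * ((Sel i)ᵀ * M * Sel i) := by
  calc M * Sel i = (∑ j, Sel j * (Sel j)ᵀ) * M * Sel i := by rw [hsum, Matrix.one_mul]
    _ = ∑ j, Sel j * ((Sel j)ᵀ * M * Sel i) := by
      simp only [Matrix.sum_mul, Matrix.mul_assoc]
    _ = Sel i * ((Sel i)ᵀ * M * Sel i) :=
      Finset.sum_eq_single_of_mem i (Finset.mem_univ i)
        fun j _ hj => by rw [hM j hj, Matrix.mul_zero]

theorem selector_transpose_mul_eq_of_offDiag_eq_zero (Sel : ∀ i, Matrix m (d i) α)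
    (hsum : ∑ j, Sel j * (Sel j)ᵀ = 1) (M : Matrix m m α) (i : ι)
    (hM : ∀ k, k ≠ i → (Sel i)ᵀ * M * Sel k = 0) :
    (Sel i)ᵀ * M = (Sel i)ᵀ * M * Sel i * (Sel i)ᵀ := by
  calc (Sel i)ᵀ * M = (Sel i)ᵀ * M * ∑ k, Sel k * (Sel k)ᵀ := by rw [hsum, Matrix.mul_one]
    _ = ∑ k, (Sel i)ᵀ * M * Sel k * (Sel k)ᵀ := by
      simp only [Matrix.mul_sum, Matrix.mul_assoc]
    _ = (Sel i)ᵀ * M * Sel i * (Sel i)ᵀ :=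
      Finset.sum_eq_single_of_mem i (Finset.mem_univ i)
        fun k _ hk => by rw [hM k hk, Matrix.zero_mul]

end BlockSelectors

theorem PosDef.transpose_mul_mul_of_transpose_mul_self_eq_one {m k : Type*} [Fintype m]
    [Fintype k] [DecidableEq k] {A : Matrix m m ℝ} (hA : A.PosDef) {P : Matrix m k ℝ}
    (hP : Pᵀ * P = 1) : (Pᵀ * A * P).PosDef := by
  have hinj : Function.Injective P.mulVec :=
    Function.LeftInverse.injective (g := Pᵀ.mulVec) fun x => by
      rw [mulVec_mulVec, hP, one_mulVec]
  simpa only [conjTranspose_eq_transpose_of_trivial] using hA.conjTranspose_mul_mul_same hinj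

theorem projector_mul_compression_inv {m k : Type*} [Fintype m] [Fintype k] [DecidableEq k]
    {R S : Matrix m m ℝ} {P : Matrix m k ℝ} (hRP : R * P = P * (Pᵀ * R * P))
    (hB : (Pᵀ * (R + S) * P).PosDef) :
    (R + P * Pᵀ * S) * (P * (Pᵀ * (R + S) * P)⁻¹ * Pᵀ) = P * Pᵀ := by
  have hPB : (R + P * Pᵀ * S) * P = P * (Pᵀ * (R + S) * P) := by
    rw [Matrix.add_mul, hRP]
    simp only [Matrix.add_mul, Matrix.mul_add, Matrix.mul_assoc]
  rw [← Matrix.mul_assoc, ← Matrix.mul_assoc, hPB, Matrix.mul_assoc P,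
    mul_nonsing_inv _ ((isUnit_iff_isUnit_det _).mp hB.isUnit), Matrix.mul_one]

end Matrix

theorem stmt11 {n r : ℕ} {d : Fin n → ℕ}
    (Sel : ∀ i : Fin n, Matrix (Fin r) (Fin (d i)) ℝ)
    (hortho : ∀ i, (Sel i)ᵀ * Sel i = 1)
    (hsum : ∑ i, Sel i * (Sel i)ᵀ = 1)
    (R S : Matrix (Fin r) (Fin r) ℝ) (hR : R.PosDef)
    (hblk : ∀ j k, j ≠ k → (Sel j)ᵀ * R * Sel k = 0)
    (hS : S.PosSemidef)
    (i : Fin n)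
    (Ihat : Matrix (Fin r) (Fin r) ℝ) (hIhat : Ihat = 1 - Sel i * (Sel i)ᵀ)
    (Z : Matrix (Fin r) (Fin r) ℝ) (hZ : Z = (R + S)⁻¹)
    (Zi : Matrix (Fin r) (Fin r) ℝ)
    (hZi : Zi = Sel i * ((Sel i)ᵀ * (R + S) * Sel i)⁻¹ * (Sel i)ᵀ) :
    Z * (Ihat * Z⁻¹ + Z⁻¹ * Ihat - Ihat * (R + S) * Ihat
      + Z⁻¹ * Zi * Z⁻¹ - Ihat * S * Zi * Z⁻¹ - Z⁻¹ * Zi * S * Ihat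
      + Ihat * S * Zi * S * Ihat) * Z = Z := by
  have hApd : (R + S).PosDef := hR.add_posSemidef hS
  have hA : IsUnit (R + S).det := (isUnit_iff_isUnit_det _).mp hApd.isUnit
  have hRP := mul_selector_eq_of_offDiag_eq_zero Sel hsum R i fun j hj => hblk j i hj
  have hPR :=
    selector_transpose_mul_eq_of_offDiag_eq_zero Sel hsum R i fun k hk => hblk i k hk.symm
  have hQRQ : Sel i * (Sel i)ᵀ * R * (Sel i * (Sel i)ᵀ) = Sel i * (Sel i)ᵀ * R := by
    simp only [Matrix.mul_assoc] at hPR ⊢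
    rw [← hPR]
  have hSchur := projector_mul_compression_inv hRP
    (hApd.transpose_mul_mul_of_transpose_mul_self_eq_one (hortho i))
  subst hIhat hZi
  rw [hZ, nonsing_inv_nonsing_inv _ hA,
    compl_sandwich_add_schur_correction_eq R S _ _ hSchur hQRQ, nonsing_inv_mul _ hA,
    Matrix.one_mul]
end
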